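/- Let A be a unital C*-algebra, a a nonzero positive element of A, and x, y ∈ A admitting a-adjoints x^{#a}, y^{#a}, with ‖x‖_a, ‖x^{#a}‖_a, ‖y‖_a, ‖y^{#a}‖_a all finite. Then v_a(x + y)² ≤ v_a(x)² + v_a(y)² + v_a(y x) + (1/2)·‖x^{#a} x + y y^{#a}‖_a. -/

import Mathlib

/-!
Each `f ∈ S_a(A)` makes `⟨u, v⟩ = f (u* a v)` a semi-inner product (realised in the GNS space of
`f` via `u ↦ √a u`) in which `e = 1` is a unit vector, `⟨e, u⟩ = f (a u)`, and `x ↦ y x` has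
adjoint `x ↦ y^{#a} x`. Expanding `|f (a (x + y))|² ≤ (|⟨e, x⟩| + |⟨e, y^{#a}⟩|)²`, the cross term
is controlled by Buzano's inequality
`2 |⟨x, e⟩ ⟨e, y^{#a}⟩| ≤ ‖x‖ ‖y^{#a}‖ + |⟨x, y^{#a}⟩|`, where `⟨x, y^{#a}⟩` is `f (a y x)` up to
conjugation and, by AM-GM, `‖x‖ ‖y^{#a}‖ ≤ ½ Re f (a (x^{#a} x + y y^{#a}))`. Taking suprema needs
the relevant `a`-seminorms to be finite: an element `z` with `a z = z* a` satisfies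
`f (z* a z) ≤ ‖z‖²`, by iterating Cauchy–Schwarz along `z, z², z⁴, …`, and every `w` with an
`a`-adjoint `w'` inherits the bound `f (w* a w) = f (a w' w) ≤ ‖w' w‖`.
-/

open scoped ComplexOrder

section

variable {A : Type*} [CStarAlgebra A] [PartialOrder A] [StarOrderedRing A]

/-- A positive linear functional on `A`: `f (x* x) ≥ 0` for all `x`. -/
def IsPosLF (f : A →ₗ[ℂ] ℂ) : Prop := ∀ x : A, 0 ≤ f (star x * x)

/-- Membership in `S_a(A)`: positive linear functionals `f` with `f a = 1`. -/
def MemSa (a : A) (f : A →ₗ[ℂ] ℂ) : Prop := IsPosLF f ∧ f a = 1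

/-- The set of values whose supremum is the `a`-seminorm `‖x‖ₐ`. -/
def aNormSet (a x : A) : Set ℝ :=
  {r : ℝ | ∃ f : A →ₗ[ℂ] ℂ, MemSa a f ∧ r = Real.sqrt (f (star x * a * x)).re}

/-- The `a`-seminorm `‖x‖ₐ = sup {√(f(x* a x)) : f ∈ S_a(A)}`. -/
noncomputable def aNorm (a x : A) : ℝ := sSup (aNormSet a x)

/-- The `a`-numerical radius `vₐ(x) = sup {|f(a x)| : f ∈ S_a(A)}`. -/
noncomputable def aNR (a x : A) : ℝ :=
  sSup {r : ℝ | ∃ f : A →ₗ[ℂ] ℂ, MemSa a f ∧ r = ‖f (a * x)‖}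

open scoped InnerProductSpace

theorem two_mul_norm_inner_mul_inner_le {𝕜 E : Type*} [RCLike 𝕜] [SeminormedAddCommGroup E]
    [InnerProductSpace 𝕜 E] {e : E} (he : ‖e‖ = 1) (u v : E) :
    2 * ‖⟪u, e⟫_𝕜 * ⟪e, v⟫_𝕜‖ ≤ ‖u‖ * ‖v‖ + ‖⟪u, v⟫_𝕜‖ := by
  set c := ⟪e, v⟫_𝕜
  -- Buzano's inequality: reflecting `v` in the line spanned by `e` keeps its norm
  set w := (2 * c) • e - v
  have hw : ‖w‖ = ‖v‖ := by
    have hsq : ‖w‖ ^ 2 = ‖v‖ ^ 2 := by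
      have hre : RCLike.re ((starRingEnd 𝕜) (2 * c) * c) = 2 * ‖c‖ ^ 2 := by
        simp only [map_mul, map_ofNat, mul_assoc, RCLike.conj_mul]
        norm_cast
      rw [norm_sub_sq (𝕜 := 𝕜), inner_smul_left, norm_smul, he, mul_one, hre, norm_mul,
        RCLike.norm_two]
      ring
    exact (sq_eq_sq₀ (norm_nonneg _) (norm_nonneg _)).1 hsq
  have huw : ⟪u, w⟫_𝕜 = 2 * (⟪u, e⟫_𝕜 * c) - ⟪u, v⟫_𝕜 := by
    rw [inner_sub_right, inner_smul_right]; ring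
  calc 2 * ‖⟪u, e⟫_𝕜 * c‖ = ‖⟪u, w⟫_𝕜 + ⟪u, v⟫_𝕜‖ := by
        rw [huw, sub_add_cancel, norm_mul (2 : 𝕜), RCLike.norm_two]
    _ ≤ ‖u‖ * ‖w‖ + ‖⟪u, v⟫_𝕜‖ :=
        (norm_add_le _ _).trans (by gcongr; exact norm_inner_le_norm _ _)
    _ = ‖u‖ * ‖v‖ + ‖⟪u, v⟫_𝕜‖ := by rw [hw]

theorem le_of_sq_le_apply_two_mul {p : ℕ → ℝ} {C r : ℝ} (hr : 0 ≤ r)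
    (hsq : ∀ n, p n ^ 2 ≤ p (2 * n)) (hle : ∀ n, 0 < n → p n ≤ C * r ^ n) : p 1 ≤ r := by
  by_contra! hlt
  have hp : 0 < p 1 := hr.trans_lt hlt
  have hiter : ∀ k, p 1 ^ 2 ^ k ≤ p (2 ^ k) := by
    intro k
    induction k with
    | zero => simp
    | succ k ih =>
      calc p 1 ^ 2 ^ (k + 1) = (p 1 ^ 2 ^ k) ^ 2 := by rw [pow_succ, pow_mul]
        _ ≤ p (2 ^ k) ^ 2 := by gcongr
        _ ≤ p (2 * 2 ^ k) := hsq _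
        _ = p (2 ^ (k + 1)) := by rw [pow_succ']
  have hq : 0 ≤ r / p 1 := div_nonneg hr hp.le
  have hq1 : r / p 1 < 1 := (div_lt_one hp).2 hlt
  have hlim : Filter.Tendsto (fun k : ℕ => C * (r / p 1) ^ 2 ^ k) Filter.atTop (nhds 0) := by
    simpa using ((tendsto_pow_atTop_nhds_zero_of_lt_one hq hq1).comp
      (tendsto_pow_atTop_atTop_of_one_lt (one_lt_two : 1 < 2))).const_mul C
  have hone : ∀ k : ℕ, 1 ≤ C * (r / p 1) ^ 2 ^ k := by
    intro k
    rw [div_pow, mul_div_assoc', le_div_iff₀ (by positivity), one_mul]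
    exact (hiter k).trans (hle _ (by positivity))
  linarith [ge_of_tendsto' hlim hone]

def IsAAdjoint {R : Type*} [Mul R] [Star R] (a x x' : R) : Prop := a * x' = star x * a

namespace IsAAdjoint

variable {R : Type*} {a x x' y y' : R}

lemma symm [Monoid R] [StarMul R] (ha : IsSelfAdjoint a) (h : IsAAdjoint a x x') :
    IsAAdjoint a x' x := by
  simpa [IsAAdjoint, star_mul, ha.star_eq] using (congr_arg star h).symm

lemma mul [Semigroup R] [StarMul R] (hx : IsAAdjoint a x x') (hy : IsAAdjoint a y y') :
    IsAAdjoint a (y * x) (x' * y') := by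
  rw [IsAAdjoint, ← mul_assoc, hx, mul_assoc, hy, ← mul_assoc, star_mul]

lemma add [NonUnitalNonAssocSemiring R] [StarAddMonoid R] (hx : IsAAdjoint a x x')
    (hy : IsAAdjoint a y y') : IsAAdjoint a (x + y) (x' + y') := by
  rw [IsAAdjoint, mul_add, hx, hy, star_add, add_mul]

lemma pow [Monoid R] [StarMul R] (hx : IsAAdjoint a x x) (n : ℕ) :
    IsAAdjoint a (x ^ n) (x ^ n) := by
  rw [IsAAdjoint, star_pow]
  exact SemiconjBy.pow_right hx n

end IsAAdjoint

lemma IsPosLF.map_nonneg {f : A →ₗ[ℂ] ℂ} (hf : IsPosLF f) {w : A} (hw : 0 ≤ w) : 0 ≤ f w := by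
  obtain ⟨s, rfl⟩ := CStarAlgebra.nonneg_iff_eq_star_mul_self.1 hw
  exact hf s

noncomputable def IsPosLF.toPositiveLinearMap {f : A →ₗ[ℂ] ℂ} (hf : IsPosLF f) : A →ₚ[ℂ] ℂ :=
  .mk₀ f fun _ => hf.map_nonneg

lemma norm_apply_star (f : A →ₚ[ℂ] ℂ) (w : A) : ‖f (star w)‖ = ‖f w‖ := by
  rw [map_star, norm_star]

section PositiveFunctional

variable (f : A →ₚ[ℂ] ℂ) {a : A}

noncomputable def sqrtMulPreGNS (a u : A) : f.PreGNS := f.toPreGNS (CFC.sqrt a * u)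

lemma inner_sqrtMulPreGNS (ha : 0 ≤ a) (u v : A) :
    ⟪sqrtMulPreGNS f a u, sqrtMulPreGNS f a v⟫_ℂ = f (star u * a * v) := by
  rw [sqrtMulPreGNS, sqrtMulPreGNS, PositiveLinearMap.preGNS_inner_def,
    PositiveLinearMap.ofPreGNS_toPreGNS, PositiveLinearMap.ofPreGNS_toPreGNS, star_mul,
    (CFC.sqrt_nonneg a).isSelfAdjoint.star_eq, mul_assoc, ← mul_assoc (CFC.sqrt a),
    CFC.sqrt_mul_sqrt_self a ha, ← mul_assoc]

lemma norm_sqrtMulPreGNS_sq (ha : 0 ≤ a) (u : A) :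
    ‖sqrtMulPreGNS f a u‖ ^ 2 = (f (star u * a * u)).re := by
  rw [norm_sq_eq_re_inner (𝕜 := ℂ), inner_sqrtMulPreGNS f ha]
  rfl

lemma norm_sqrtMulPreGNS_one (ha : 0 ≤ a) (hfa : f a = 1) : ‖sqrtMulPreGNS f a 1‖ = 1 := by
  rw [← pow_eq_one_iff_of_nonneg (norm_nonneg _) two_ne_zero, norm_sqrtMulPreGNS_sq f ha,
    star_one, one_mul, mul_one, hfa, Complex.one_re]

lemma inner_sqrtMulPreGNS_one_left (ha : 0 ≤ a) (u : A) :
    ⟪sqrtMulPreGNS f a 1, sqrtMulPreGNS f a u⟫_ℂ = f (a * u) := by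
  rw [inner_sqrtMulPreGNS f ha, star_one, one_mul]

lemma norm_apply_mul_sq_le (ha : 0 ≤ a) (hfa : f a = 1) (w : A) :
    ‖f (a * w)‖ ^ 2 ≤ (f (star w * a * w)).re := by
  have h := norm_inner_le_norm (𝕜 := ℂ) (sqrtMulPreGNS f a 1) (sqrtMulPreGNS f a w)
  rw [inner_sqrtMulPreGNS_one_left f ha, norm_sqrtMulPreGNS_one f ha hfa, one_mul] at h
  rw [← norm_sqrtMulPreGNS_sq f ha]
  gcongr

lemma re_apply_star_mul_mul_le_norm_sq (ha : 0 ≤ a) (hfa : f a = 1) {z : A}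
    (hz : IsAAdjoint a z z) : (f (star z * a * z)).re ≤ ‖z‖ ^ 2 := by
  have hpow (n : ℕ) : star (z ^ n) * a * z ^ n = a * z ^ (2 * n) := by
    rw [← hz.pow n, mul_assoc, ← pow_add, two_mul]
  -- `p n = f (z^n* a z^n) = f (a z^(2n))`, so Cauchy–Schwarz against `1` gives `p n ^ 2 ≤ p (2 n)`
  have key := le_of_sq_le_apply_two_mul (p := fun n => (f (star (z ^ n) * a * z ^ n)).re)
    (C := ‖f 1‖ * ‖a‖) (r := ‖z‖ ^ 2) (by positivity) ?_ ?_
  · simpa using key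
  · intro n
    calc (f (star (z ^ n) * a * z ^ n)).re ^ 2 ≤ ‖f (a * z ^ (2 * n))‖ ^ 2 := by
          rw [hpow]
          exact sq_le_sq.2 (by rw [abs_norm]; exact Complex.abs_re_le_norm _)
      _ ≤ (f (star (z ^ (2 * n)) * a * z ^ (2 * n))).re := norm_apply_mul_sq_le f ha hfa _
  · intro n hn
    calc (f (star (z ^ n) * a * z ^ n)).re ≤ ‖f (star (z ^ n) * a * z ^ n)‖ :=
          Complex.re_le_norm _
      _ ≤ ‖f 1‖ * ‖star (z ^ n) * a * z ^ n‖ :=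
          f.norm_apply_le_of_nonneg _ (star_left_conjugate_nonneg ha _)
      _ ≤ ‖f 1‖ * (‖star (z ^ n)‖ * ‖a‖ * ‖z ^ n‖) := by gcongr; exact norm_mul₃_le
      _ = ‖f 1‖ * (‖z ^ n‖ * ‖a‖ * ‖z ^ n‖) := by rw [norm_star]
      _ ≤ ‖f 1‖ * (‖z‖ ^ n * ‖a‖ * ‖z‖ ^ n) := by gcongr <;> exact norm_pow_le' z hn
      _ = ‖f 1‖ * ‖a‖ * (‖z‖ ^ 2) ^ n := by ring

lemma re_apply_star_mul_mul_le_of_isAAdjoint (ha : 0 ≤ a) (hfa : f a = 1) {w w' : A}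
    (hw : IsAAdjoint a w w') :
    (f (star w * a * w)).re ≤ ‖w' * w‖ := by
  have hself : IsAAdjoint a (w' * w) (w' * w) := hw.mul (hw.symm ha.isSelfAdjoint)
  have hsq : ‖f (a * (w' * w))‖ ^ 2 ≤ ‖w' * w‖ ^ 2 :=
    (norm_apply_mul_sq_le f ha hfa _).trans (re_apply_star_mul_mul_le_norm_sq f ha hfa hself)
  rw [← hw, mul_assoc]
  exact (Complex.re_le_norm _).trans ((pow_le_pow_iff_left₀ (norm_nonneg _) (norm_nonneg _)
    two_ne_zero).1 hsq)

end PositiveFunctional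

lemma norm_apply_mul_add_sq_le (f : A →ₚ[ℂ] ℂ) {a : A} (ha : 0 ≤ a) (hfa : f a = 1)
    {x x' y y' : A} (hx : IsAAdjoint a x x') (hy : IsAAdjoint a y y') :
    ‖f (a * (x + y))‖ ^ 2 ≤ ‖f (a * x)‖ ^ 2 + ‖f (a * y)‖ ^ 2 + ‖f (a * (y * x))‖ +
      1 / 2 * (f (a * (x' * x + y * y'))).re := by
  have hsa := ha.isSelfAdjoint
  set ι := sqrtMulPreGNS f a
  have hxe : ‖⟪ι x, ι 1⟫_ℂ‖ = ‖f (a * x)‖ := by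
    rw [inner_sqrtMulPreGNS f ha, mul_one, ← norm_apply_star, star_mul, hsa.star_eq, star_star]
  have hey : ‖⟪ι 1, ι y'⟫_ℂ‖ = ‖f (a * y)‖ := by
    rw [inner_sqrtMulPreGNS_one_left f ha, ← norm_apply_star, star_mul, hsa.star_eq,
      ← hy.symm hsa]
  have hxy : ‖⟪ι x, ι y'⟫_ℂ‖ = ‖f (a * (y * x))‖ := by
    rw [inner_sqrtMulPreGNS f ha, mul_assoc, hy, ← norm_apply_star, star_mul, star_mul,
      hsa.star_eq, star_star, star_star, mul_assoc]
  have hsum : ‖ι x‖ ^ 2 + ‖ι y'‖ ^ 2 = (f (a * (x' * x + y * y'))).re := by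
    rw [norm_sqrtMulPreGNS_sq f ha, norm_sqrtMulPreGNS_sq f ha, ← hx, ← hy.symm hsa,
      mul_assoc, mul_assoc, ← Complex.add_re, ← map_add, mul_add]
  have hbuzano :=
    two_mul_norm_inner_mul_inner_le (𝕜 := ℂ) (norm_sqrtMulPreGNS_one f ha hfa) (ι x) (ι y')
  rw [norm_mul, hxe, hey, hxy] at hbuzano
  have hamgm : ‖ι x‖ * ‖ι y'‖ ≤ 1 / 2 * (‖ι x‖ ^ 2 + ‖ι y'‖ ^ 2) := by
    nlinarith [sq_nonneg (‖ι x‖ - ‖ι y'‖)]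
  calc ‖f (a * (x + y))‖ ^ 2 ≤ (‖f (a * x)‖ + ‖f (a * y)‖) ^ 2 := by
        gcongr
        rw [mul_add, map_add]
        exact norm_add_le _ _
    _ = ‖f (a * x)‖ ^ 2 + ‖f (a * y)‖ ^ 2 + 2 * (‖f (a * x)‖ * ‖f (a * y)‖) := by ring
    _ ≤ _ := by rw [← hsum]; linarith

omit [PartialOrder A] [StarOrderedRing A] in
lemma aNorm_nonneg (a w : A) : 0 ≤ aNorm a w :=
  Real.sSup_nonneg (by rintro _ ⟨f, -, rfl⟩; exact Real.sqrt_nonneg _)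

omit [PartialOrder A] [StarOrderedRing A] in
lemma aNR_nonneg (a w : A) : 0 ≤ aNR a w :=
  Real.sSup_nonneg (by rintro _ ⟨f, -, rfl⟩; exact norm_nonneg _)

section ASeminorm

variable {a w : A} {f : A →ₗ[ℂ] ℂ}

lemma bddAbove_aNormSet_of_isAAdjoint (ha : 0 ≤ a) {w' : A} (hw : IsAAdjoint a w w') :
    BddAbove (aNormSet a w) := by
  refine ⟨√‖w' * w‖, ?_⟩
  rintro _ ⟨f, ⟨hpos, hfa⟩, rfl⟩
  exact Real.sqrt_le_sqrt
    (re_apply_star_mul_mul_le_of_isAAdjoint hpos.toPositiveLinearMap ha hfa hw)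

lemma norm_apply_mul_le_aNorm (ha : 0 ≤ a) (hw : BddAbove (aNormSet a w)) (hf : MemSa a f) :
    ‖f (a * w)‖ ≤ aNorm a w :=
  (Real.le_sqrt_of_sq_le (norm_apply_mul_sq_le hf.1.toPositiveLinearMap ha hf.2 w)).trans
    (le_csSup hw ⟨f, hf, rfl⟩)

lemma norm_apply_mul_le_aNR (ha : 0 ≤ a) (hw : BddAbove (aNormSet a w)) (hf : MemSa a f) :
    ‖f (a * w)‖ ≤ aNR a w :=
  le_csSup ⟨aNorm a w, by rintro _ ⟨g, hg, rfl⟩; exact norm_apply_mul_le_aNorm ha hw hg⟩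
    ⟨f, hf, rfl⟩

omit [PartialOrder A] [StarOrderedRing A] in
lemma aNR_sq_le {M : ℝ} (hM : 0 ≤ M) (h : ∀ f : A →ₗ[ℂ] ℂ, MemSa a f → ‖f (a * w)‖ ^ 2 ≤ M) :
    aNR a w ^ 2 ≤ M := by
  have hle : aNR a w ≤ √M :=
    Real.sSup_le (by rintro _ ⟨f, hf, rfl⟩; exact Real.le_sqrt_of_sq_le (h f hf))
      (Real.sqrt_nonneg M)
  calc aNR a w ^ 2 ≤ √M ^ 2 := by gcongr; exact aNR_nonneg a w
    _ = M := Real.sq_sqrt hM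

end ASeminorm

theorem stmt12_general (a : A) (ha : 0 ≤ a)
    (x xadj y yadj : A)
    (hxadj : a * xadj = star x * a) (hyadj : a * yadj = star y * a) :
    aNR a (x + y) ^ 2 ≤
      aNR a x ^ 2 + aNR a y ^ 2 + aNR a (y * x) +
        (1 / 2) * aNorm a (xadj * x + y * yadj) := by
  have hx : IsAAdjoint a x xadj := hxadj
  have hy : IsAAdjoint a y yadj := hyadj
  have hsa := ha.isSelfAdjoint
  have hz : IsAAdjoint a (xadj * x + y * yadj) (xadj * x + y * yadj) :=
    (hx.mul (hx.symm hsa)).add ((hy.symm hsa).mul hy)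
  refine aNR_sq_le (by positivity [aNR_nonneg a (y * x), aNorm_nonneg a (xadj * x + y * yadj)])
    fun f hf => ?_
  have hpt : ‖f (a * (x + y))‖ ^ 2 ≤ ‖f (a * x)‖ ^ 2 + ‖f (a * y)‖ ^ 2 + ‖f (a * (y * x))‖ +
      1 / 2 * (f (a * (xadj * x + y * yadj))).re :=
    norm_apply_mul_add_sq_le hf.1.toPositiveLinearMap ha hf.2 hx hy
  refine hpt.trans ?_
  have hre := (Complex.re_le_norm _).trans
    (norm_apply_mul_le_aNorm ha (bddAbove_aNormSet_of_isAAdjoint ha hz) hf)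
  gcongr
  · exact norm_apply_mul_le_aNR ha (bddAbove_aNormSet_of_isAAdjoint ha hx) hf
  · exact norm_apply_mul_le_aNR ha (bddAbove_aNormSet_of_isAAdjoint ha hy) hf
  · exact norm_apply_mul_le_aNR ha (bddAbove_aNormSet_of_isAAdjoint ha (hx.mul hy)) hf

/-- `vₐ(x+y)² ≤ vₐ(x)² + vₐ(y)² + vₐ(yx) + ½ ‖x^{#a}x + y y^{#a}‖ₐ`. -/
theorem stmt12 (a : A) (ha : 0 ≤ a) (ha0 : a ≠ 0)
    (x xadj y yadj : A)
    (hxadj : a * xadj = star x * a) (hyadj : a * yadj = star y * a)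
    (hx : BddAbove (aNormSet a x)) (hxa : BddAbove (aNormSet a xadj))
    (hy : BddAbove (aNormSet a y)) (hya : BddAbove (aNormSet a yadj)) :
    aNR a (x + y) ^ 2 ≤
      aNR a x ^ 2 + aNR a y ^ 2 + aNR a (y * x) +
        (1 / 2) * aNorm a (xadj * x + y * yadj) :=
  stmt12_general a ha x xadj y yadj hxadj hyadj
end
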